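/- Let D be an oriented knot diagram with n ≥ 1 crossings, modeled by a Gauss code g, and let D' be the diagram obtained from D by a crossing change at a crossing c₀. Then X_{D'}(t) − t · X_D(t) = (1 − t) · B in ℤ[t]. -/

import Mathlib

open Polynomial Finset

/-- An oriented knot diagram with `n` crossings, modeled by its oriented Gauss code. -/
structure GaussCode (n : ℕ) where
  g : ZMod (2 * n) → Fin n × Bool
  o : Fin n → ZMod (2 * n)
  u : Fin n → ZMod (2 * n)
  over_iff : ∀ (c : Fin n) (e : ZMod (2 * n)), g e = (c, true) ↔ e = o c
  under_iff : ∀ (c : Fin n) (e : ZMod (2 * n)), g e = (c, false) ↔ e = u c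

namespace GaussCode

variable {n : ℕ}

/-- The warping degree of the base position `e`: the number of crossings whose
under-passage occurs strictly before its over-passage when traversing the diagram
starting at `e`. -/
def d (D : GaussCode n) (e : ZMod (2 * n)) : ℕ :=
  (Finset.univ.filter fun c : Fin n => (D.u c - e).val < (D.o c - e).val).card

/-- The warping crossing polynomial. -/
noncomputable def Xpoly (D : GaussCode n) : Polynomial ℤ :=
  ∑ c : Fin n, Polynomial.X ^ D.d (D.o c)

/-- The warping polynomial. -/
noncomputable def Wpoly (D : GaussCode n) : Polynomial ℤ :=
  ∑ k ∈ Finset.range (2 * n), Polynomial.X ^ D.d (k : ZMod (2 * n))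

/-- The warping degree of the diagram: minimum over all base positions. -/
noncomputable def wdeg (D : GaussCode n) : ℕ :=
  sInf (Set.range fun e : ZMod (2 * n) => D.d e)

/-- The diagram is alternating. -/
def Alternating (D : GaussCode n) : Prop :=
  ∀ e : ZMod (2 * n), (D.g e).2 ≠ (D.g (e + 1)).2

end GaussCode

/-!
Along the circle the warping degree rises by one after an over-passage and drops by one
after an under-passage, and changing `c₀` shifts it by `-1` on the arc from the over- to the
under-crossing of `c₀` and by `+1` elsewhere. With these two rules the contribution of each
position `e` to `X_{D'} - t X_D - (1 - t) B` equals `G e - G (e + 1)`, where `G e` is `t ^ d e`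
on that arc and `0` off it; summing around the circle gives `0`.
-/

section OccursBefore

variable {N : ℕ}

def OccursBefore (e x y : ZMod N) : Prop := (x - e).val < (y - e).val

instance (e x y : ZMod N) : Decidable (OccursBefore e x y) :=
  inferInstanceAs (Decidable (_ < _))

variable {e x y : ZMod N}

lemma occursBefore_self_left (h : x ≠ y) : OccursBefore x x y := by
  rw [OccursBefore, sub_self, ZMod.val_zero, ZMod.val_pos, sub_ne_zero]
  exact h.symm

lemma not_occursBefore_self_right : ¬ OccursBefore y x y := by
  simp [OccursBefore]

variable [NeZero N]

lemma ZMod.val_neg_one_eq_pred : (-1 : ZMod N).val = N - 1 := by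
  obtain ⟨k, rfl⟩ := Nat.exists_eq_succ_of_ne_zero (NeZero.ne N)
  simp [ZMod.val_neg_one k]

lemma ZMod.val_sub_add_one_add_one (h : x ≠ e) : (x - (e + 1)).val + 1 = (x - e).val := by
  have hpos : 0 < (x - e).val := ZMod.val_pos.mpr (sub_ne_zero.mpr h)
  have hcast : x - (e + 1) = (((x - e).val - 1 : ℕ) : ZMod N) := by
    rw [Nat.cast_sub hpos, ZMod.natCast_zmod_val, Nat.cast_one]
    ring
  rw [hcast, ZMod.val_cast_of_lt (by have := (x - e).val_lt; omega)]
  omega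

lemma occursBefore_add_one_iff (hx : x ≠ e) (hy : y ≠ e) :
    OccursBefore (e + 1) x y ↔ OccursBefore e x y := by
  rw [OccursBefore, OccursBefore, ← ZMod.val_sub_add_one_add_one hx,
    ← ZMod.val_sub_add_one_add_one hy, Nat.add_lt_add_iff_right]

lemma occursBefore_add_one_right (h : x ≠ y) : OccursBefore (y + 1) x y := by
  have := ZMod.val_sub_add_one_add_one h
  have := (x - y).val_lt
  rw [OccursBefore, sub_add_cancel_left, ZMod.val_neg_one_eq_pred]
  omega

lemma not_occursBefore_add_one_left : ¬ OccursBefore (x + 1) x y := by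
  have := (y - (x + 1)).val_lt
  rw [OccursBefore, sub_add_cancel_left, ZMod.val_neg_one_eq_pred]
  omega

lemma not_occursBefore_iff (h : x ≠ y) : ¬ OccursBefore e x y ↔ OccursBefore e y x := by
  have : (x - e).val ≠ (y - e).val := fun hv => h (sub_left_injective (ZMod.val_injective N hv))
  unfold OccursBefore
  omega

end OccursBefore

lemma ZMod.sum_range_natCast {N : ℕ} [NeZero N] {M : Type*} [AddCommMonoid M]
    (f : ZMod N → M) : ∑ k ∈ range N, f k = ∑ e : ZMod N, f e := by
  refine sum_nbij' Nat.cast ZMod.val (fun _ _ => mem_univ _)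
    (fun e _ => mem_range.mpr e.val_lt) (fun k hk => ZMod.val_cast_of_lt (mem_range.mp hk))
    (fun e _ => ZMod.natCast_zmod_val e) (fun _ _ => rfl)

namespace GaussCode

variable {n : ℕ} (D : GaussCode n)

lemma d_eq_card (e : ZMod (2 * n)) : D.d e = #{c | OccursBefore e (D.u c) (D.o c)} := rfl

lemma g_o (c : Fin n) : D.g (D.o c) = (c, true) := (D.over_iff c _).mpr rfl

lemma g_u (c : Fin n) : D.g (D.u c) = (c, false) := (D.under_iff c _).mpr rfl

lemma o_ne_u (c c' : Fin n) : D.o c ≠ D.u c' := fun h => by simpa [h, g_u] using D.g_o c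

lemma o_injective : Function.Injective D.o := fun c c' h => by
  simpa [h, g_o] using (D.g_o c).symm

lemma u_injective : Function.Injective D.u := fun c c' h => by
  simpa [h, g_u] using (D.g_u c).symm

lemma exists_eq_o_or_eq_u (e : ZMod (2 * n)) : ∃ c, e = D.o c ∨ e = D.u c := by
  refine ⟨(D.g e).1, ?_⟩
  cases hb : (D.g e).2
  · exact .inr ((D.under_iff _ e).mp (by rw [← hb]))
  · exact .inl ((D.over_iff _ e).mp (by rw [← hb]))

lemma snd_g_eq_true_iff (e : ZMod (2 * n)) : (D.g e).2 = true ↔ e ∈ Set.range D.o := by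
  refine ⟨fun h => ⟨(D.g e).1, ((D.over_iff _ e).mp (by rw [← h])).symm⟩, ?_⟩
  rintro ⟨c, rfl⟩
  rw [g_o]

noncomputable def overTerm (e : ZMod (2 * n)) : ℤ[X] := if (D.g e).2 then X ^ D.d e else 0

noncomputable def arcTerm (c₀ : Fin n) (e : ZMod (2 * n)) : ℤ[X] :=
  if OccursBefore e (D.u c₀) (D.o c₀) then X ^ D.d e else 0

noncomputable def bTerm (c₀ : Fin n) (e : ZMod (2 * n)) : ℤ[X] :=
  if OccursBefore e (D.u c₀) (D.o c₀) then X ^ (D.d e - 1) else 0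

lemma Xpoly_eq_sum_overTerm [NeZero n] : D.Xpoly = ∑ e, D.overTerm e := by
  have : ({e | (D.g e).2} : Finset (ZMod (2 * n))) = univ.map ⟨D.o, D.o_injective⟩ := by
    ext e
    simp only [mem_filter, mem_univ, true_and, mem_map, Function.Embedding.coeFn_mk,
      snd_g_eq_true_iff, Set.mem_range]
  simp only [overTerm]
  rw [← sum_filter, this, sum_map]
  rfl

variable [NeZero n]

lemma d_o_add_one (a : Fin n) : D.d (D.o a + 1) = D.d (D.o a) + 1 := by
  have hfilter : ({c | OccursBefore (D.o a + 1) (D.u c) (D.o c)} : Finset (Fin n))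
      = insert a ({c | OccursBefore (D.o a) (D.u c) (D.o c)} : Finset (Fin n)) := by
    ext c
    rcases eq_or_ne c a with rfl | hc
    · simp [occursBefore_add_one_right (D.o_ne_u c c).symm]
    · simp [hc, occursBefore_add_one_iff (D.o_ne_u a c).symm (D.o_injective.ne hc)]
  rw [d_eq_card, d_eq_card, hfilter,
    card_insert_of_notMem (by simp [not_occursBefore_self_right])]

lemma d_u_add_one_add_one (a : Fin n) : D.d (D.u a + 1) + 1 = D.d (D.u a) := by
  have hfilter : ({c | OccursBefore (D.u a) (D.u c) (D.o c)} : Finset (Fin n))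
      = insert a ({c | OccursBefore (D.u a + 1) (D.u c) (D.o c)} : Finset (Fin n)) := by
    ext c
    rcases eq_or_ne c a with rfl | hc
    · simp [occursBefore_self_left (D.o_ne_u c c).symm]
    · simp [hc, occursBefore_add_one_iff (D.u_injective.ne hc) (D.o_ne_u c a)]
  rw [d_eq_card, d_eq_card, hfilter,
    card_insert_of_notMem (by simp [not_occursBefore_add_one_left])]

end GaussCode

structure IsCrossingChange {n : ℕ} (D D' : GaussCode n) (c₀ : Fin n) : Prop where
  g_o : D'.g (D.o c₀) = (c₀, false)
  g_u : D'.g (D.u c₀) = (c₀, true)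
  g_of_ne : ∀ e, e ≠ D.o c₀ → e ≠ D.u c₀ → D'.g e = D.g e

open GaussCode

namespace IsCrossingChange

variable {n : ℕ} {D D' : GaussCode n} {c₀ : Fin n}

lemma o_self (hD : IsCrossingChange D D' c₀) : D'.o c₀ = D.u c₀ :=
  ((D'.over_iff c₀ _).mp hD.g_u).symm

lemma u_self (hD : IsCrossingChange D D' c₀) : D'.u c₀ = D.o c₀ :=
  ((D'.under_iff c₀ _).mp hD.g_o).symm

lemma o_of_ne (hD : IsCrossingChange D D' c₀) {c : Fin n} (hc : c ≠ c₀) : D'.o c = D.o c := by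
  refine ((D'.over_iff c _).mp ?_).symm
  rw [hD.g_of_ne _ (D.o_injective.ne hc) (D.o_ne_u c c₀), D.g_o]

lemma u_of_ne (hD : IsCrossingChange D D' c₀) {c : Fin n} (hc : c ≠ c₀) : D'.u c = D.u c := by
  refine ((D'.under_iff c _).mp ?_).symm
  rw [hD.g_of_ne _ (D.o_ne_u c₀ c).symm (D.u_injective.ne hc), D.g_u]

lemma occursBefore_iff [NeZero n] (hD : IsCrossingChange D D' c₀) (e : ZMod (2 * n))
    (c : Fin n) :
    OccursBefore e (D'.u c) (D'.o c) ↔ (OccursBefore e (D.u c) (D.o c) ↔ c ≠ c₀) := by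
  rcases eq_or_ne c c₀ with rfl | hc
  · rw [hD.o_self, hD.u_self, ← not_occursBefore_iff (D.o_ne_u c c).symm]
    simp
  · simp [hD.o_of_ne hc, hD.u_of_ne hc, hc]

lemma d_add_one [NeZero n] (hD : IsCrossingChange D D' c₀) {e : ZMod (2 * n)}
    (hP : OccursBefore e (D.u c₀) (D.o c₀)) : D'.d e + 1 = D.d e := by
  have hfilter : ({c | OccursBefore e (D'.u c) (D'.o c)} : Finset (Fin n))
      = ({c | OccursBefore e (D.u c) (D.o c)} : Finset (Fin n)).erase c₀ := by
    ext c
    simp only [mem_filter, mem_univ, true_and, mem_erase, hD.occursBefore_iff]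
    rcases eq_or_ne c c₀ with rfl | hc <;> tauto
  rw [d_eq_card, d_eq_card, hfilter, card_erase_add_one (by simpa using hP)]

lemma d_eq_add_one [NeZero n] (hD : IsCrossingChange D D' c₀) {e : ZMod (2 * n)}
    (hP : ¬ OccursBefore e (D.u c₀) (D.o c₀)) : D'.d e = D.d e + 1 := by
  have hfilter : ({c | OccursBefore e (D'.u c) (D'.o c)} : Finset (Fin n))
      = insert c₀ ({c | OccursBefore e (D.u c) (D.o c)} : Finset (Fin n)) := by
    ext c
    simp only [mem_filter, mem_univ, true_and, mem_insert, hD.occursBefore_iff]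
    rcases eq_or_ne c c₀ with rfl | hc <;> tauto
  rw [d_eq_card, d_eq_card, hfilter, card_insert_of_notMem (by simpa using hP)]

lemma overTerm_sub_eq_arcTerm_sub_of_o [NeZero n] (hD : IsCrossingChange D D' c₀)
    (a : Fin n) :
    D'.overTerm (D.o a) - X * D.overTerm (D.o a)
        - (1 - X) * D.bTerm c₀ (D.o a)
      = D.arcTerm c₀ (D.o a) - D.arcTerm c₀ (D.o a + 1) := by
  rcases eq_or_ne a c₀ with rfl | ha
  · simp only [overTerm, arcTerm, bTerm, hD.g_o, D.g_o, not_occursBefore_self_right,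
      occursBefore_add_one_right (D.o_ne_u a a).symm, D.d_o_add_one, if_true, if_false,
      Bool.false_eq_true]
    ring
  have hg : D'.g (D.o a) = D.g (D.o a) := hD.g_of_ne _ (D.o_injective.ne ha) (D.o_ne_u a c₀)
  have hP := occursBefore_add_one_iff (D.o_ne_u a c₀).symm (D.o_injective.ne ha).symm
  by_cases hPe : OccursBefore (D.o a) (D.u c₀) (D.o c₀)
  · obtain ⟨k, hk⟩ : ∃ k, D.d (D.o a) = k + 1 := ⟨D'.d (D.o a), (hD.d_add_one hPe).symm⟩
    have hk' : D'.d (D.o a) = k := by have := hD.d_add_one hPe; omega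
    simp only [overTerm, arcTerm, bTerm, hg, D.g_o, hP, hPe, D.d_o_add_one, hk, hk', if_true,
      Nat.add_sub_cancel]
    ring
  · simp only [overTerm, arcTerm, bTerm, hg, D.g_o, hP, hPe, D.d_o_add_one, hD.d_eq_add_one hPe,
      if_true, if_false]
    ring

lemma overTerm_sub_eq_arcTerm_sub_of_u [NeZero n] (hD : IsCrossingChange D D' c₀)
    (a : Fin n) :
    D'.overTerm (D.u a) - X * D.overTerm (D.u a)
        - (1 - X) * D.bTerm c₀ (D.u a)
      = D.arcTerm c₀ (D.u a) - D.arcTerm c₀ (D.u a + 1) := by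
  rcases eq_or_ne a c₀ with rfl | ha
  · have hPe := occursBefore_self_left (D.o_ne_u a a).symm
    have hk' := hD.d_add_one hPe
    simp only [overTerm, arcTerm, bTerm, hD.g_u, D.g_u, hPe, not_occursBefore_add_one_left,
      ← hk', if_true, if_false, Bool.false_eq_true, Nat.add_sub_cancel]
    ring
  have hg : D'.g (D.u a) = D.g (D.u a) :=
    hD.g_of_ne _ (D.o_ne_u c₀ a).symm (D.u_injective.ne ha)
  have hP := occursBefore_add_one_iff (D.u_injective.ne ha).symm (D.o_ne_u c₀ a)
  by_cases hPe : OccursBefore (D.u a) (D.u c₀) (D.o c₀)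
  · simp only [overTerm, arcTerm, bTerm, hg, D.g_u, hP, hPe, ← D.d_u_add_one_add_one a,
      if_true, if_false, Bool.false_eq_true, Nat.add_sub_cancel]
    ring
  · simp only [overTerm, arcTerm, bTerm, hg, D.g_u, hP, hPe, if_false, Bool.false_eq_true]
    ring

lemma overTerm_sub_eq_arcTerm_sub [NeZero n] (hD : IsCrossingChange D D' c₀)
    (e : ZMod (2 * n)) :
    D'.overTerm e - X * D.overTerm e
        - (1 - X) * D.bTerm c₀ e
      = D.arcTerm c₀ e - D.arcTerm c₀ (e + 1) := by
  obtain ⟨a, rfl | rfl⟩ := D.exists_eq_o_or_eq_u e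
  exacts [hD.overTerm_sub_eq_arcTerm_sub_of_o a, hD.overTerm_sub_eq_arcTerm_sub_of_u a]

end IsCrossingChange

theorem crossing_change_B_general
    (n : ℕ) (D D' : GaussCode n) (c₀ : Fin n)
    (h1 : D'.g (D.o c₀) = (c₀, false))
    (h2 : D'.g (D.u c₀) = (c₀, true))
    (h3 : ∀ e : ZMod (2 * n), e ≠ D.o c₀ → e ≠ D.u c₀ → D'.g e = D.g e) :
    D'.Xpoly - Polynomial.X * D.Xpoly
      = (1 - Polynomial.X) *
          ∑ k ∈ Finset.range (2 * n),
            if (D.u c₀ - (k : ZMod (2 * n))).val < (D.o c₀ - (k : ZMod (2 * n))).val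
            then (Polynomial.X : Polynomial ℤ) ^ (D.d (k : ZMod (2 * n)) - 1) else 0 := by
  have : NeZero n := ⟨c₀.pos.ne'⟩
  have hD : IsCrossingChange D D' c₀ := ⟨h1, h2, h3⟩
  have htelescope : ∑ e, (D.arcTerm c₀ e - D.arcTerm c₀ (e + 1)) = 0 := by
    rw [sum_sub_distrib, sub_eq_zero]
    exact (Equiv.sum_comp (Equiv.addRight 1) _).symm
  change _ = _ * ∑ k ∈ range (2 * n), D.bTerm c₀ k
  rw [ZMod.sum_range_natCast (D.bTerm c₀), D'.Xpoly_eq_sum_overTerm, D.Xpoly_eq_sum_overTerm,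
    ← sub_eq_zero, mul_sum, mul_sum, ← sum_sub_distrib, ← sum_sub_distrib]
  simpa only [hD.overTerm_sub_eq_arcTerm_sub] using htelescope

/-- Crossing change formula: `X_{D'}(t) − t⬝X_D(t) = (1 − t)⬝B`, where `B` is the sum of
`t^(d e − 1)` over the edges from the over-crossing of `c₀` to the under-crossing of `c₀`. -/
theorem crossing_change_B
    (n : ℕ) (hn : 1 ≤ n) (D D' : GaussCode n) (c₀ : Fin n)
    (h1 : D'.g (D.o c₀) = (c₀, false))
    (h2 : D'.g (D.u c₀) = (c₀, true))
    (h3 : ∀ e : ZMod (2 * n), e ≠ D.o c₀ → e ≠ D.u c₀ → D'.g e = D.g e) :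
    D'.Xpoly - Polynomial.X * D.Xpoly
      = (1 - Polynomial.X) *
          ∑ k ∈ Finset.range (2 * n),
            if (D.u c₀ - (k : ZMod (2 * n))).val < (D.o c₀ - (k : ZMod (2 * n))).val
            then (Polynomial.X : Polynomial ℤ) ^ (D.d (k : ZMod (2 * n)) - 1) else 0 :=
  crossing_change_B_general n D D' c₀ h1 h2 h3
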